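/- Under the hypotheses of the per-layer error bound (1-Lipschitz entrywise activation, ‖W^{(l)}‖_F ≤ τ, signals bounded by B, per-layer weight perturbation at most ε in Frobenius norm after permutation, permuted biases), the outputs y = x^{(L+1)} of the original network and ŷ = x̂^{(L+1)} of the modified network satisfy, with Π = Π^{(L)}: ‖ŷ − Π y‖₂ ≤ εB·Σ_{k=0}^{L−1}(τ+ε)^k, which equals εB·((τ+ε)^L − 1)/(τ+ε−1) when τ+ε ≠ 1. In particular, if τ = 1 then ‖ŷ − Π y‖₂ ≤ ((1+ε)^L − 1)·B. -/

import Mathlib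

/-! With `M_l = Π^{(l)} W_l Π^{(l+1)ᵀ}` (a reindexing of `W_l`, so `‖M_l‖_F = ‖W_l‖_F ≤ τ`) the
permuted original signal satisfies `Π^{(l+1)} x_{l+1} = σ(M_lᵀ Π^{(l)} x_l + b̂_l)`. Comparing with
`x̂_{l+1} = σ(Ŵ_lᵀ x̂_l + b̂_l)`, the 1-Lipschitz σ, the split
`M_lᵀ Π^{(l)} x_l − Ŵ_lᵀ x̂_l = M_lᵀ (Π^{(l)} x_l − x̂_l) − (Ŵ_l − M_l)ᵀ x̂_l`, the bound
`‖Aᵀ v‖₂ ≤ ‖A‖_F ‖v‖₂` and `‖x̂_l‖₂ ≤ B + D_l` give the recursion `D_{l+1} ≤ (τ+ε) D_l + εB` for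
`D_l = ‖Π^{(l)} x_l − x̂_l‖₂`. Unrolling it from `D_0 = 0` yields the geometric sum. -/

open Matrix

/-- Frobenius norm of a real matrix. -/
noncomputable def frob {m n : ℕ} (A : Matrix (Fin m) (Fin n) ℝ) : ℝ :=
  Real.sqrt (∑ i, ∑ j, (A i j) ^ 2)

/-- Euclidean (ℓ₂) norm of a vector. -/
noncomputable def l2 {n : ℕ} (v : Fin n → ℝ) : ℝ :=
  Real.sqrt (∑ i, (v i) ^ 2)

/-- The permutation matrix of `e`, with `(permMat e) i j = 1` iff `i = e j`. -/
def permMat {n : ℕ} (e : Equiv.Perm (Fin n)) : Matrix (Fin n) (Fin n) ℝ :=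
  fun i j => if i = e j then 1 else 0

lemma l2_nonneg {n : ℕ} (v : Fin n → ℝ) : 0 ≤ l2 v := Real.sqrt_nonneg _

lemma l2_eq_norm_toLp {n : ℕ} (v : Fin n → ℝ) : l2 v = ‖WithLp.toLp 2 v‖ := by
  simp [l2, EuclideanSpace.norm_eq]

lemma l2_sub_le {n : ℕ} (u v : Fin n → ℝ) : l2 (u - v) ≤ l2 u + l2 v := by
  simpa only [l2_eq_norm_toLp, WithLp.toLp_sub] using norm_sub_le _ _

lemma l2_comp_perm {n : ℕ} (e : Equiv.Perm (Fin n)) (v : Fin n → ℝ) : l2 (v ∘ e) = l2 v := by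
  simp only [l2, Function.comp_apply, Equiv.sum_comp e fun i => v i ^ 2]

lemma frob_submatrix_perm {m n : ℕ} (A : Matrix (Fin m) (Fin n) ℝ) (f : Equiv.Perm (Fin m))
    (g : Equiv.Perm (Fin n)) : frob (A.submatrix f g) = frob A := by
  unfold frob
  congr 1
  calc ∑ i, ∑ j, A (f i) (g j) ^ 2 = ∑ i, ∑ j, A (f i) j ^ 2 :=
        Finset.sum_congr rfl fun i _ => Equiv.sum_comp g fun j => A (f i) j ^ 2
    _ = ∑ i, ∑ j, A i j ^ 2 := Equiv.sum_comp f fun i => ∑ j, A i j ^ 2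

lemma l2_transpose_mulVec_le {m n : ℕ} (A : Matrix (Fin m) (Fin n) ℝ) (v : Fin m → ℝ) :
    l2 (Aᵀ *ᵥ v) ≤ frob A * l2 v := by
  rw [l2, frob, l2, ← Real.sqrt_mul (by positivity), Finset.sum_comm, Finset.sum_mul]
  refine Real.sqrt_le_sqrt (Finset.sum_le_sum fun j _ => ?_)
  simpa only [mulVec, dotProduct, transpose_apply] using
    Finset.sum_mul_sq_le_sq_mul_sq Finset.univ (fun i => A i j) v

lemma l2_map_sub_le_of_lipschitz {n : ℕ} {σ : ℝ → ℝ} (hσ : ∀ u v : ℝ, |σ u - σ v| ≤ |u - v|)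
    (u v : Fin n → ℝ) : l2 (fun i => σ (u i) - σ (v i)) ≤ l2 (u - v) :=
  Real.sqrt_le_sqrt <| Finset.sum_le_sum fun i _ => sq_le_sq.mpr <| hσ (u i) (v i)

lemma permMat_eq_toMatrix {n : ℕ} (e : Equiv.Perm (Fin n)) :
    permMat e = e.symm.toPEquiv.toMatrix := by
  ext i j
  simp [permMat, PEquiv.toMatrix_apply, Equiv.symm_apply_eq]

lemma permMat_mulVec {n : ℕ} (e : Equiv.Perm (Fin n)) (v : Fin n → ℝ) :
    permMat e *ᵥ v = v ∘ e.symm := by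
  rw [permMat_eq_toMatrix, PEquiv.toMatrix_toPEquiv_mulVec]

lemma permMat_mul_mul_transpose {m n : ℕ} (f : Equiv.Perm (Fin m)) (g : Equiv.Perm (Fin n))
    (A : Matrix (Fin m) (Fin n) ℝ) :
    permMat f * A * (permMat g)ᵀ = A.submatrix f.symm g.symm := by
  rw [permMat_eq_toMatrix, permMat_eq_toMatrix, ← PEquiv.toMatrix_symm, ← Equiv.toPEquiv_symm,
    Equiv.symm_symm, PEquiv.toMatrix_toPEquiv_mul, PEquiv.mul_toMatrix_toPEquiv,
    submatrix_submatrix]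
  rfl

lemma permMat_conj_transpose_mulVec {m n : ℕ} (f : Equiv.Perm (Fin m))
    (g : Equiv.Perm (Fin n)) (A : Matrix (Fin m) (Fin n) ℝ) (v : Fin m → ℝ) :
    (permMat f * A * (permMat g)ᵀ)ᵀ *ᵥ (permMat f *ᵥ v) = permMat g *ᵥ (Aᵀ *ᵥ v) := by
  rw [permMat_mul_mul_transpose, transpose_submatrix, permMat_mulVec, permMat_mulVec,
    submatrix_mulVec_equiv]
  simp [Function.comp_def]

lemma l2_layer_error_le {m n : ℕ} {σ : ℝ → ℝ} (hσ : ∀ u v : ℝ, |σ u - σ v| ≤ |u - v|)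
    (f : Equiv.Perm (Fin m)) (g : Equiv.Perm (Fin n)) {W Wh : Matrix (Fin m) (Fin n) ℝ}
    (b : Fin n → ℝ) {x : Fin m → ℝ} (xh : Fin m → ℝ) {τ ε B : ℝ} (hε : 0 ≤ ε)
    (hW : frob W ≤ τ) (hWh : frob (Wh - permMat f * W * (permMat g)ᵀ) ≤ ε) (hx : l2 x ≤ B) :
    l2 (permMat g *ᵥ (fun i => σ ((Wᵀ *ᵥ x + b) i)) -
        fun i => σ ((Whᵀ *ᵥ xh + permMat g *ᵥ b) i))
      ≤ (τ + ε) * l2 (permMat f *ᵥ x - xh) + ε * B := by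
  have hM : frob (permMat f * W * (permMat g)ᵀ) ≤ τ := by
    rwa [permMat_mul_mul_transpose, frob_submatrix_perm]
  set M := permMat f * W * (permMat g)ᵀ
  set D := permMat f *ᵥ x - xh
  have hpermute : permMat g *ᵥ (fun i => σ ((Wᵀ *ᵥ x + b) i)) =
      fun i => σ ((Mᵀ *ᵥ (permMat f *ᵥ x) + permMat g *ᵥ b) i) := by
    rw [permMat_conj_transpose_mulVec, ← mulVec_add, permMat_mulVec, permMat_mulVec]
    rfl
  have hsplit : (Mᵀ *ᵥ (permMat f *ᵥ x) + permMat g *ᵥ b) - (Whᵀ *ᵥ xh + permMat g *ᵥ b) =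
      Mᵀ *ᵥ D - (Wh - M)ᵀ *ᵥ xh := by
    simp only [D, mulVec_sub, transpose_sub, sub_mulVec]
    abel
  have hxh : l2 xh ≤ B + l2 D := by
    have := l2_sub_le (permMat f *ᵥ x) D
    rw [sub_sub_cancel, permMat_mulVec, l2_comp_perm] at this
    linarith
  calc _ ≤ l2 (Mᵀ *ᵥ D - (Wh - M)ᵀ *ᵥ xh) := by
        rw [hpermute, ← hsplit]
        exact l2_map_sub_le_of_lipschitz hσ _ _
    _ ≤ frob M * l2 D + frob (Wh - M) * l2 xh :=
        (l2_sub_le _ _).trans <|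
          add_le_add (l2_transpose_mulVec_le _ _) (l2_transpose_mulVec_le _ _)
    _ ≤ τ * l2 D + ε * (B + l2 D) :=
        add_le_add (mul_le_mul_of_nonneg_right hM (l2_nonneg _))
          (mul_le_mul hWh hxh (l2_nonneg _) hε)
    _ = (τ + ε) * l2 D + ε * B := by ring

lemma le_mul_geom_sum_of_le_mul_add {a : ℕ → ℝ} {c r : ℝ} {L : ℕ} (hc : 0 ≤ c) (h0 : a 0 ≤ 0)
    (hstep : ∀ l < L, a (l + 1) ≤ c * a l + r) : a L ≤ r * ∑ k ∈ Finset.range L, c ^ k := by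
  induction L with
  | zero => simpa using h0
  | succ L ih =>
    calc a (L + 1) ≤ c * a L + r := hstep L L.lt_succ_self
      _ ≤ c * (r * ∑ k ∈ Finset.range L, c ^ k) + r := by
          gcongr
          exact ih fun l hl => hstep l (hl.trans L.lt_succ_self)
      _ = r * ∑ k ∈ Finset.range (L + 1), c ^ k := by rw [geom_sum_succ]; ring

theorem stmt_11_general (L : ℕ) (d : ℕ → ℕ)
    (σ : ℝ → ℝ) (hσ : ∀ u v : ℝ, |σ u - σ v| ≤ |u - v|)
    (W : ∀ l, Matrix (Fin (d l)) (Fin (d (l + 1))) ℝ)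
    (b : ∀ l, Fin (d (l + 1)) → ℝ)
    (x : ∀ l, Fin (d l) → ℝ)
    (hx : ∀ l, x (l + 1) = fun i => σ (((W l)ᵀ.mulVec (x l) + b l) i))
    (τ B ε : ℝ) (hτ : 0 < τ) (hε : 0 ≤ ε)
    (hWτ : ∀ l, l < L → frob (W l) ≤ τ)
    (hxB : ∀ l, l ≤ L → l2 (x l) ≤ B)
    (e : ∀ l, Equiv.Perm (Fin (d l)))
    (he0 : e 0 = Equiv.refl (Fin (d 0)))
    (Wh : ∀ l, Matrix (Fin (d l)) (Fin (d (l + 1))) ℝ)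
    (hWh : ∀ l, l < L →
      frob (Wh l - permMat (e l) * W l * (permMat (e (l + 1)))ᵀ) ≤ ε)
    (bh : ∀ l, Fin (d (l + 1)) → ℝ)
    (hbh : ∀ l, bh l = (permMat (e (l + 1))).mulVec (b l))
    (xh : ∀ l, Fin (d l) → ℝ)
    (hxh0 : xh 0 = x 0)
    (hxh : ∀ l, xh (l + 1) = fun i => σ (((Wh l)ᵀ.mulVec (xh l) + bh l) i)) :
    l2 ((permMat (e L)).mulVec (x L) - xh L)
        ≤ ε * B * (∑ k ∈ Finset.range L, (τ + ε) ^ k) ∧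
      (τ + ε ≠ 1 →
        l2 ((permMat (e L)).mulVec (x L) - xh L)
          ≤ ε * B * ((τ + ε) ^ L - 1) / (τ + ε - 1)) ∧
      (τ = 1 →
        l2 ((permMat (e L)).mulVec (x L) - xh L)
          ≤ ((1 + ε) ^ L - 1) * B) := by
  have hbase : l2 (permMat (e 0) *ᵥ x 0 - xh 0) ≤ 0 := by
    simp [he0, hxh0, permMat_mulVec, l2]
  have hstep : ∀ l < L, l2 (permMat (e (l + 1)) *ᵥ x (l + 1) - xh (l + 1)) ≤
      (τ + ε) * l2 (permMat (e l) *ᵥ x l - xh l) + ε * B := fun l hl => by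
    rw [hx, hxh, hbh]
    exact l2_layer_error_le hσ (e l) (e (l + 1)) (b l) (xh l) hε (hWτ l hl) (hWh l hl)
      (hxB l hl.le)
  have hbound := le_mul_geom_sum_of_le_mul_add
    (a := fun l => l2 (permMat (e l) *ᵥ x l - xh l)) (by positivity) hbase hstep
  refine ⟨hbound, fun hne => ?_, fun hτ1 => ?_⟩
  · rwa [geom_sum_eq hne, ← mul_div_assoc] at hbound
  · subst hτ1
    exact hbound.trans_eq (by rw [← geom_sum_mul, add_sub_cancel_left]; ring)

/-- Per-layer error bound for the RePurposed network. The original network has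
signals `x (l+1) = σ((W l)ᵀ x l + b l)` started at `x 0`; the modified network
uses permutations `e l` (with `e 0 = id`), weights `Ŵ l` that are `ε`-close in
Frobenius norm to `Π^{(l)} · W l · (Π^{(l+1)})ᵀ`, and permuted biases. Then the output of the
modified network deviates from the permuted original output by at most
`εB·Σ_{k<L}(τ+ε)^k`, with the closed geometric form when `τ+ε ≠ 1`, and the
bound `((1+ε)^L − 1)·B` when `τ = 1`. -/
theorem stmt_11 (L : ℕ) (d : ℕ → ℕ)
    (σ : ℝ → ℝ) (hσ : ∀ u v : ℝ, |σ u - σ v| ≤ |u - v|)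
    (W : ∀ l, Matrix (Fin (d l)) (Fin (d (l + 1))) ℝ)
    (b : ∀ l, Fin (d (l + 1)) → ℝ)
    (x : ∀ l, Fin (d l) → ℝ)
    (hx : ∀ l, x (l + 1) = fun i => σ (((W l)ᵀ.mulVec (x l) + b l) i))
    (τ B ε : ℝ) (hτ : 0 < τ) (hB : 0 < B) (hε : 0 ≤ ε)
    (hWτ : ∀ l, l < L → frob (W l) ≤ τ)
    (hxB : ∀ l, l ≤ L → l2 (x l) ≤ B)
    (e : ∀ l, Equiv.Perm (Fin (d l)))
    (he0 : e 0 = Equiv.refl (Fin (d 0)))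
    (Wh : ∀ l, Matrix (Fin (d l)) (Fin (d (l + 1))) ℝ)
    (hWh : ∀ l, l < L →
      frob (Wh l - permMat (e l) * W l * (permMat (e (l + 1)))ᵀ) ≤ ε)
    (bh : ∀ l, Fin (d (l + 1)) → ℝ)
    (hbh : ∀ l, bh l = (permMat (e (l + 1))).mulVec (b l))
    (xh : ∀ l, Fin (d l) → ℝ)
    (hxh0 : xh 0 = x 0)
    (hxh : ∀ l, xh (l + 1) = fun i => σ (((Wh l)ᵀ.mulVec (xh l) + bh l) i)) :
    l2 ((permMat (e L)).mulVec (x L) - xh L)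
        ≤ ε * B * (∑ k ∈ Finset.range L, (τ + ε) ^ k) ∧
      (τ + ε ≠ 1 →
        l2 ((permMat (e L)).mulVec (x L) - xh L)
          ≤ ε * B * ((τ + ε) ^ L - 1) / (τ + ε - 1)) ∧
      (τ = 1 →
        l2 ((permMat (e L)).mulVec (x L) - xh L)
          ≤ ((1 + ε) ^ L - 1) * B) :=
  stmt_11_general L d σ hσ W b x hx τ B ε hτ hε hWτ hxB e he0 Wh hWh bh hbh xh hxh0 hxh
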